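/- arXiv:2511.06641 — 2 statements merged into one kernel-verified Lean document; each statement's English description precedes it below -/
import Mathlib

section
/- Let R̂₀, R₀, R̂₁, R₁ : ℋ → ℝ with sup_h |R̂_i(h) - R_i(h)| ≤ ε_i for i ∈ {0,1}. Let h* minimize R₁ over {h : R₀(h) ≤ α}, and let ĥ minimize R̂₁ over {h : R̂₀(h) ≤ α - ε₀} (assumed nonempty). Then R₀(ĥ) ≤ α and R₁(ĥ) ≤ inf { R₁(h) : R₀(h) ≤ α - 2ε₀ } + 2ε₁, provided {h : R₀(h) ≤ α - 2ε₀} is nonempty. -/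
theorem tightened_empirical_NP_guarantee {ℋ : Type*}
    (Rhat₀ R₀ Rhat₁ R₁ : ℋ → ℝ) (ε₀ ε₁ α : ℝ)
    (h₀conc : ∀ h, |Rhat₀ h - R₀ h| ≤ ε₀)
    (h₁conc : ∀ h, |Rhat₁ h - R₁ h| ≤ ε₁)
    (hstar : ℋ) (hstar_feas : R₀ hstar ≤ α)
    (hstar_min : ∀ h, R₀ h ≤ α → R₁ hstar ≤ R₁ h)
    (hhat : ℋ) (hhat_feas : Rhat₀ hhat ≤ α - ε₀)
    (hhat_min : ∀ h, Rhat₀ h ≤ α - ε₀ → Rhat₁ hhat ≤ Rhat₁ h)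
    (hne : ∃ h : ℋ, R₀ h ≤ α - 2 * ε₀) :
    R₀ hhat ≤ α ∧ ∀ h : ℋ, R₀ h ≤ α - 2 * ε₀ → R₁ hhat ≤ R₁ h + 2 * ε₁ := by
  constructor
  · have := abs_le.mp (h₀conc hhat)
    linarith [this.1]
  · intro h hh
    have h1 := abs_le.mp (h₀conc h)
    have hfeas : Rhat₀ h ≤ α - ε₀ := by linarith [h1.1]
    have hmin := hhat_min h hfeas
    have h2 := abs_le.mp (h₁conc hhat)
    have h3 := abs_le.mp (h₁conc h)
    linarith [h2.2, h3.1]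
end

section
/- Let ℋ be convex and φ convex, and suppose the value function γ(α) = inf { R₁(h) : h ∈ ℋ, R₀(h) ≤ α } is finite on [α/8, 1]. Assume 0 ≤ ε ≤ 7α/16 and γ(α/8) - γ(α) ≤ C for a constant C. Then γ(α - 2ε) - γ(α) ≤ (16 C/(7α)) · ε. -/
open MeasureTheory

theorem tightened_value_function_linear_bound {𝒳 : Type*} [MeasurableSpace 𝒳]
    (μ₀ μ₁ : Measure 𝒳) [IsProbabilityMeasure μ₀] [IsProbabilityMeasure μ₁]
    (φ : ℝ → ℝ) (hφconv : ConvexOn ℝ Set.univ φ) (hφnonneg : ∀ t, 0 ≤ φ t)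
    (ℰ : Set (𝒳 → ℝ)) (hℰmeas : ∀ h ∈ ℰ, Measurable h)
    (hℰconv : ∀ h₁ ∈ ℰ, ∀ h₂ ∈ ℰ, ∀ θ : ℝ, 0 < θ → θ < 1 →
      (fun x => θ * h₁ x + (1 - θ) * h₂ x) ∈ ℰ)
    (hint₀ : ∀ h ∈ ℰ, Integrable (fun x => φ (h x)) μ₀)
    (hint₁ : ∀ h ∈ ℰ, Integrable (fun x => φ (-h x)) μ₁)
    (γ : ℝ → ℝ)
    (hγ : ∀ α', γ α' = sInf {r | ∃ h ∈ ℰ, (∫ x, φ (h x) ∂μ₀) ≤ α' ∧ r = ∫ x, φ (-h x) ∂μ₁})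
    (α ε C : ℝ) (hα : 0 < α) (hα1 : α ≤ 1)
    (hfin : ∃ h ∈ ℰ, (∫ x, φ (h x) ∂μ₀) ≤ α / 8)
    (hε0 : 0 ≤ ε) (hε : ε ≤ 7 * α / 16)
    (hC : γ (α / 8) - γ α ≤ C) :
    γ (α - 2 * ε) - γ α ≤ (16 * C / (7 * α)) * ε := by
  set S : ℝ → Set ℝ :=
    fun a => {r | ∃ h ∈ ℰ, (∫ x, φ (h x) ∂μ₀) ≤ a ∧ r = ∫ x, φ (-h x) ∂μ₁} with hS
  have hbdd : ∀ a : ℝ, BddBelow (S a) := by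
    intro a
    refine ⟨0, ?_⟩
    rintro r ⟨h, hh, -, rfl⟩
    exact integral_nonneg fun x => hφnonneg _
  have hne : ∀ a : ℝ, α / 8 ≤ a → (S a).Nonempty := by
    intro a ha
    obtain ⟨h, hh, hR⟩ := hfin
    exact ⟨_, h, hh, le_trans hR ha, rfl⟩
  -- convexity of γ between α/8 and α
  have hkey : ∀ t : ℝ, 0 < t → t < 1 →
      γ (t * (α / 8) + (1 - t) * α) ≤ t * γ (α / 8) + (1 - t) * γ α := by
    intro t ht0 ht1
    have ht0' : (0:ℝ) ≤ t := ht0.le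
    have ht1' : (0:ℝ) ≤ 1 - t := by linarith
    have hstep : ∀ r₁ ∈ S (α / 8), ∀ r₂ ∈ S α,
        sInf (S (t * (α / 8) + (1 - t) * α)) ≤ t * r₁ + (1 - t) * r₂ := by
      rintro r₁ ⟨h₁, hh₁, hR₁, rfl⟩ r₂ ⟨h₂, hh₂, hR₂, rfl⟩
      have hmem : (fun x => t * h₁ x + (1 - t) * h₂ x) ∈ ℰ := hℰconv h₁ hh₁ h₂ hh₂ t ht0 ht1
      have hpt0 : ∀ x, φ (t * h₁ x + (1 - t) * h₂ x) ≤ t * φ (h₁ x) + (1 - t) * φ (h₂ x) := by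
        intro x
        have := hφconv.2 (Set.mem_univ (h₁ x)) (Set.mem_univ (h₂ x)) ht0' ht1' (by ring)
        simpa using this
      have hpt1 : ∀ x, φ (-(t * h₁ x + (1 - t) * h₂ x)) ≤
          t * φ (-h₁ x) + (1 - t) * φ (-h₂ x) := by
        intro x
        have := hφconv.2 (Set.mem_univ (-h₁ x)) (Set.mem_univ (-h₂ x)) ht0' ht1' (by ring)
        have h' : -(t * h₁ x + (1 - t) * h₂ x) = t • (-h₁ x) + (1 - t) • (-h₂ x) := by
          simp [smul_eq_mul]; ring
        rw [h']
        simpa using this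
      have hint0' : Integrable (fun x => t * φ (h₁ x) + (1 - t) * φ (h₂ x)) μ₀ :=
        ((hint₀ _ hh₁).const_mul t).add ((hint₀ _ hh₂).const_mul (1 - t))
      have hint1' : Integrable (fun x => t * φ (-h₁ x) + (1 - t) * φ (-h₂ x)) μ₁ :=
        ((hint₁ _ hh₁).const_mul t).add ((hint₁ _ hh₂).const_mul (1 - t))
      have hI0 : (∫ x, φ (t * h₁ x + (1 - t) * h₂ x) ∂μ₀) ≤
          t * (∫ x, φ (h₁ x) ∂μ₀) + (1 - t) * (∫ x, φ (h₂ x) ∂μ₀) := by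
        calc (∫ x, φ (t * h₁ x + (1 - t) * h₂ x) ∂μ₀)
            ≤ ∫ x, (t * φ (h₁ x) + (1 - t) * φ (h₂ x)) ∂μ₀ :=
              integral_mono (hint₀ _ hmem) hint0' hpt0
          _ = t * (∫ x, φ (h₁ x) ∂μ₀) + (1 - t) * (∫ x, φ (h₂ x) ∂μ₀) := by
              rw [integral_add ((hint₀ _ hh₁).const_mul t) ((hint₀ _ hh₂).const_mul (1 - t)),
                integral_const_mul, integral_const_mul]
      have hI1 : (∫ x, φ (-(t * h₁ x + (1 - t) * h₂ x)) ∂μ₁) ≤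
          t * (∫ x, φ (-h₁ x) ∂μ₁) + (1 - t) * (∫ x, φ (-h₂ x) ∂μ₁) := by
        calc (∫ x, φ (-(t * h₁ x + (1 - t) * h₂ x)) ∂μ₁)
            ≤ ∫ x, (t * φ (-h₁ x) + (1 - t) * φ (-h₂ x)) ∂μ₁ :=
              integral_mono (hint₁ _ hmem) hint1' hpt1
          _ = t * (∫ x, φ (-h₁ x) ∂μ₁) + (1 - t) * (∫ x, φ (-h₂ x) ∂μ₁) := by
              rw [integral_add ((hint₁ _ hh₁).const_mul t) ((hint₁ _ hh₂).const_mul (1 - t)),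
                integral_const_mul, integral_const_mul]
      have hmemS : (∫ x, φ (-(t * h₁ x + (1 - t) * h₂ x)) ∂μ₁) ∈
          S (t * (α / 8) + (1 - t) * α) := by
        refine ⟨_, hmem, ?_, rfl⟩
        calc (∫ x, φ (t * h₁ x + (1 - t) * h₂ x) ∂μ₀)
            ≤ t * (∫ x, φ (h₁ x) ∂μ₀) + (1 - t) * (∫ x, φ (h₂ x) ∂μ₀) := hI0
          _ ≤ t * (α / 8) + (1 - t) * α := by
              gcongr
      exact le_trans (csInf_le (hbdd _) hmemS) hI1
    have hneb : (S α).Nonempty := hne α (by linarith)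
    have hnea : (S (α / 8)).Nonempty := hne (α / 8) le_rfl
    have h1 : ∀ r₂ ∈ S α,
        sInf (S (t * (α / 8) + (1 - t) * α)) ≤ t * sInf (S (α / 8)) + (1 - t) * r₂ := by
      intro r₂ hr₂
      have : (sInf (S (t * (α / 8) + (1 - t) * α)) - (1 - t) * r₂) / t ≤ sInf (S (α / 8)) := by
        apply le_csInf hnea
        intro r₁ hr₁
        rw [div_le_iff₀ ht0]
        have := hstep r₁ hr₁ r₂ hr₂
        linarith [mul_comm r₁ t]
      rw [div_le_iff₀ ht0] at this
      linarith [mul_comm (sInf (S (α / 8))) t]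
    have h2 : sInf (S (t * (α / 8) + (1 - t) * α)) ≤
        t * sInf (S (α / 8)) + (1 - t) * sInf (S α) := by
      have ht1'' : (0:ℝ) < 1 - t := by linarith
      have : (sInf (S (t * (α / 8) + (1 - t) * α)) - t * sInf (S (α / 8))) / (1 - t) ≤
          sInf (S α) := by
        apply le_csInf hneb
        intro r₂ hr₂
        rw [div_le_iff₀ ht1'']
        have := h1 r₂ hr₂
        linarith [mul_comm r₂ (1 - t)]
      rw [div_le_iff₀ ht1''] at this
      linarith [mul_comm (sInf (S α)) (1 - t)]
    rw [hγ, hγ, hγ]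
    exact h2
  -- handle edge cases
  rcases eq_or_lt_of_le hε0 with hεz | hεpos
  · rw [← hεz]
    simp
  rcases eq_or_lt_of_le hε with hεmax | hεlt
  · have hαeq : α - 2 * ε = α / 8 := by rw [hεmax]; ring
    have hCeq : (16 * C / (7 * α)) * ε = C := by
      rw [hεmax]; field_simp
    rw [hαeq, hCeq]
    exact hC
  · set t : ℝ := 16 * ε / (7 * α) with ht
    have ht0 : 0 < t := by positivity
    have ht1 : t < 1 := by
      rw [ht, div_lt_one (by positivity)]
      linarith
    have hαeq : α - 2 * ε = t * (α / 8) + (1 - t) * α := by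
      rw [ht]; field_simp; ring
    have := hkey t ht0 ht1
    rw [← hαeq] at this
    have htC : t * C = (16 * C / (7 * α)) * ε := by rw [ht]; ring
    nlinarith [mul_le_mul_of_nonneg_left hC ht0.le]
end
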